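/- arXiv:2503.01141 — 3 statements merged into one kernel-verified Lean document; each statement's English description precedes it below -/
import Mathlib

section
/- (Theorem 1, accuracy formula.) For every total token budget B ∈ ℕ, the optimal number of correctly answered questions under budget B is given by the greedy closed form A*(B) = max { k : k ≤ L.length and (L.take k).sum ≤ B }, i.e. it equals the largest k such that the sum of the k smallest finite token complexities is at most B. -/
/-- There are `n` questions with token complexities `τ : Fin n → ℕ∞`
(`τ i = ⊤` means question `i` is unsolvable at any response length).
Under the token complexity hypothesis, an allocation of response lengths
`t : Fin n → ℕ` answers question `i` correctly iff `τ i ≤ (t i : ℕ∞)`.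
`Astar n τ B` is the maximum number of correctly answered questions over
all allocations with total length at most `B`. -/
noncomputable def Astar (n : ℕ) (τ : Fin n → ℕ∞) (B : ℕ) : ℕ :=
  sSup { c : ℕ | ∃ t : Fin n → ℕ, (∑ i, t i) ≤ B ∧
    (Finset.univ.filter (fun i => τ i ≤ (t i : ℕ∞))).card = c }

/-- `Tstar n τ m` is the minimum total token budget `∑ i, t i` over all
allocations `t : Fin n → ℕ` answering at least `m` questions correctly. -/
noncomputable def Tstar (n : ℕ) (τ : Fin n → ℕ∞) (m : ℕ) : ℕ :=
  sInf { s : ℕ | ∃ t : Fin n → ℕ,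
    m ≤ (Finset.univ.filter (fun i => τ i ≤ (t i : ℕ∞))).card ∧ (∑ i, t i) = s }

/-- `sortedL n τ` is the list of the values `(τ i).toNat` over all indices `i`
with `τ i < ⊤`, sorted in increasing order. -/
def sortedL (n : ℕ) (τ : Fin n → ℕ∞) : List ℕ :=
  Multiset.sort
    (Multiset.map (fun i => (τ i).toNat) (Finset.univ.filter (fun i => τ i < ⊤)).val) (· ≤ ·)


/-!
An allocation `t` can only solve questions of finite complexity, and solving a set `S` of them
costs at least `∑ i ∈ S, (τ i).toNat`; conversely, spending exactly `(τ i).toNat` on each `i ∈ S`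
solves `S`. So the optimum is the largest `k` for which some `k` finite complexities have sum at
most `B`, and among all `k`-element sub-multisets the `k` smallest elements have the least sum.
-/

open Finset

theorem List.sum_take_length_le_sum_of_sublist {α : Type*} [AddMonoid α] [Preorder α]
    [AddLeftMono α] [AddRightMono α] :
    ∀ {l l' : List α}, l.Pairwise (· ≤ ·) → l'.Sublist l → (l.take l'.length).sum ≤ l'.sum
  | [], _, _, h => by simp [List.sublist_nil.mp h]
  | a :: l, l', hl, h => by
    obtain ⟨ha, hl⟩ := List.pairwise_cons.mp hl
    cases h with
    | cons _ h =>
      match l', h with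
      | [], _ => simp
      | b :: l', h =>
        simpa using add_le_add (ha b (h.subset List.mem_cons_self))
          (sum_take_length_le_sum_of_sublist hl ((List.sublist_cons_self b l').trans h))
    | cons_cons _ h => simpa using add_le_add le_rfl (sum_take_length_le_sum_of_sublist hl h)

namespace Multiset

variable {α β : Type*}

theorem sum_take_sort_le_of_le [LinearOrder α] [AddCommMonoid α] [IsOrderedAddMonoid α]
    {s t : Multiset α} (h : t ≤ s) : ((s.sort (· ≤ ·)).take (card t)).sum ≤ t.sum := by
  rw [← coe_toList t, ← sort_eq s (· ≤ ·), coe_le] at h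
  obtain ⟨m, hperm, hsub⟩ := h
  rw [← length_toList, ← sum_toList, ← hperm.length_eq, ← hperm.sum_eq]
  exact List.sum_take_length_le_sum_of_sublist (pairwise_sort s (· ≤ ·)) hsub

theorem exists_le_map_eq_of_le_map {f : α → β} {s : Multiset α} {u : Multiset β}
    (h : u ≤ s.map f) : ∃ v ≤ s, v.map f = u := by
  rw [← coe_toList s, ← coe_toList u, map_coe, coe_le] at h
  obtain ⟨m, hperm, hsub⟩ := h
  obtain ⟨l, hl, rfl⟩ := List.sublist_map_iff.mp hsub
  refine ⟨l, ?_, ?_⟩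
  · simpa using (coe_le.mpr hl.subperm : (l : Multiset α) ≤ s.toList)
  · simpa using coe_eq_coe.mpr hperm

end Multiset

theorem Finset.exists_subset_card_eq_sum_eq_sum_take_sort {ι α : Type*} [LinearOrder α]
    [AddCommMonoid α] (F : Finset ι) (f : ι → α) {k : ℕ} (hk : k ≤ #F) :
    ∃ S ⊆ F, #S = k ∧ ∑ i ∈ S, f i = (((F.val.map f).sort (· ≤ ·)).take k).sum := by
  set m : List α := ((F.val.map f).sort (· ≤ ·)).take k
  have hm : (m : Multiset α) ≤ F.val.map f := by
    rw [← Multiset.sort_eq (F.val.map f) (· ≤ ·), Multiset.coe_le]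
    exact (List.take_sublist k _).subperm
  obtain ⟨v, hvF, hv⟩ := Multiset.exists_le_map_eq_of_le_map hm
  refine ⟨⟨v, Multiset.nodup_of_le hvF F.nodup⟩, Finset.val_le_iff.mp hvF, ?_, ?_⟩
  · simpa [m, hk] using congrArg Multiset.card hv
  · simpa using congrArg Multiset.sum hv

section Allocation

variable {n : ℕ} (τ : Fin n → ℕ∞)

theorem length_sortedL : (sortedL n τ).length = #(univ.filter (τ · < ⊤)) := by
  rw [sortedL, Multiset.length_sort, Multiset.card_map, card_val]

theorem card_solved_le_length_sortedL_and_sum_take_le (t : Fin n → ℕ) :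
    #(univ.filter (fun i => τ i ≤ t i)) ≤ (sortedL n τ).length ∧
      ((sortedL n τ).take #(univ.filter (fun i => τ i ≤ t i))).sum ≤ ∑ i, t i := by
  set A := univ.filter (fun i => τ i ≤ t i)
  have hAF : A ⊆ univ.filter (τ · < ⊤) := fun i hi => by
    simpa using (mem_filter.mp hi).2.trans_lt (ENat.natCast_lt_top (t i))
  refine ⟨length_sortedL τ ▸ card_le_card hAF, ?_⟩
  calc ((sortedL n τ).take #A).sum ≤ ∑ i ∈ A, (τ i).toNat := by
        have h := Multiset.sum_take_sort_le_of_le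
          (Multiset.map_le_map (f := fun i => (τ i).toNat) (val_le_iff.mpr hAF))
        rwa [Multiset.card_map] at h
    _ ≤ ∑ i ∈ A, t i := sum_le_sum fun i hi => ENat.toNat_le_of_le_natCast (mem_filter.mp hi).2
    _ ≤ ∑ i, t i := sum_le_sum_of_subset (subset_univ A)

theorem exists_allocation_sum_eq_sum_take_sortedL {k : ℕ} (hk : k ≤ (sortedL n τ).length) :
    ∃ t : Fin n → ℕ, ∑ i, t i = ((sortedL n τ).take k).sum ∧
      k ≤ #(univ.filter (fun i => τ i ≤ t i)) := by
  obtain ⟨S, hSF, rfl, hS⟩ := exists_subset_card_eq_sum_eq_sum_take_sort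
    (univ.filter (τ · < ⊤)) (fun i => (τ i).toNat) (length_sortedL τ ▸ hk)
  refine ⟨fun i => if i ∈ S then (τ i).toNat else 0, by rw [sum_ite_mem, univ_inter, hS]; rfl,
    card_le_card fun i hi => ?_⟩
  have hτ : τ i ≠ ⊤ := (mem_filter.mp (hSF hi)).2.ne
  simp [hi, ENat.natCast_toNat hτ]

end Allocation

/-- Theorem 1, accuracy formula: the optimal number of correctly answered
questions under budget `B` equals the largest `k` such that the sum of the
`k` smallest finite token complexities is at most `B`. -/
theorem astar_eq_greedy (n : ℕ) (τ : Fin n → ℕ∞) (B : ℕ) :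
    Astar n τ B =
      sSup { k : ℕ | k ≤ (sortedL n τ).length ∧ ((sortedL n τ).take k).sum ≤ B } := by
  refine csSup_eq_csSup_of_forall_exists_le ?_ ?_
  · rintro _ ⟨t, htB, rfl⟩
    obtain ⟨hlen, hsum⟩ := card_solved_le_length_sortedL_and_sum_take_le τ t
    exact ⟨_, ⟨hlen, hsum.trans htB⟩, le_rfl⟩
  · rintro k ⟨hk, hkB⟩
    obtain ⟨t, ht, hkt⟩ := exists_allocation_sum_eq_sum_take_sortedL τ hk
    exact ⟨_, ⟨t, ht ▸ hkB, rfl⟩, hkt⟩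
end

section
/- (Converse/upper-bound direction of Theorem 1.) For any total budget B ∈ ℕ and any allocation t : Fin n → ℕ with ∑ i, t i ≤ B, the number of correctly answered questions satisfies card {i | τ i ≤ (t i : ℕ∞)} ≤ max { k : k ≤ L.length and (L.take k).sum ≤ B }. -/
/-!
Let `S` be the set of correctly answered questions. Each `i ∈ S` has `τ i` finite and
`(τ i).toNat ≤ t i`, so the complexities of `S` form a sub-multiset of `L` of total size at most
`B`. Since `L` is sorted, its first `#S` entries are the `#S` smallest finite complexities, whose
sum is at most that of any `#S` of them; hence `k = #S` is admissible in the supremum.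
-/

namespace List

variable {α : Type*} [AddCommMonoid α] [PartialOrder α] [IsOrderedAddMonoid α]

theorem sum_take_cons_le_sum_take {a : α} {l : List α} {k : ℕ}
    (hl : (a :: l).Pairwise (· ≤ ·)) (hk : k ≤ l.length) :
    ((a :: l).take k).sum ≤ (l.take k).sum := by
  cases k with
  | zero => simp
  | succ k =>
    have hk : k < l.length := hk
    rw [take_succ_cons, sum_cons, ← take_concat_get' l k hk, sum_append, sum_singleton, add_comm]
    gcongr
    exact rel_of_pairwise_cons hl (getElem_mem hk)

theorem sum_take_length_le_of_sublist {l' l : List α} (h : l' <+ l) (hl : l.Pairwise (· ≤ ·)) :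
    (l.take l'.length).sum ≤ l'.sum := by
  induction h with
  | slnil => simp
  | cons a h ih => exact (sum_take_cons_le_sum_take hl h.length_le).trans (ih hl.of_cons)
  | cons_cons a _ ih =>
    simp only [length_cons, take_succ_cons, sum_cons]
    gcongr
    exact ih hl.of_cons

end List

theorem Multiset.sum_take_card_le_of_le {α : Type*} [AddCommMonoid α] [LinearOrder α]
    [IsOrderedAddMonoid α] {s : Multiset α} {l : List α} (hl : l.Pairwise (· ≤ ·))
    (h : s ≤ l) : (l.take (card s)).sum ≤ s.sum := by
  have hsub : (s.sort (· ≤ ·)).Sublist l :=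
    List.sublist_of_subperm_of_pairwise (by rwa [← coe_le, sort_eq]) (pairwise_sort _ _) hl
  calc (l.take (card s)).sum = (l.take (s.sort (· ≤ ·)).length).sum := by rw [length_sort]
    _ ≤ (s.sort (· ≤ ·)).sum := List.sum_take_length_le_of_sublist hsub hl
    _ = s.sum := by rw [← sum_coe, sort_eq]

/-- Converse/upper-bound direction of Theorem 1: any allocation within budget
`B` answers at most `max { k : k ≤ L.length ∧ (L.take k).sum ≤ B }` questions
correctly. -/
theorem correct_count_le_greedy (n : ℕ) (τ : Fin n → ℕ∞) (B : ℕ)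
    (t : Fin n → ℕ) (ht : ∑ i, t i ≤ B) :
    (Finset.univ.filter (fun i => τ i ≤ (t i : ℕ∞))).card
      ≤ sSup { k : ℕ | k ≤ (sortedL n τ).length ∧ ((sortedL n τ).take k).sum ≤ B } := by
  set S := Finset.univ.filter (fun i => τ i ≤ (t i : ℕ∞))
  set M := S.val.map (fun i => (τ i).toNat)
  have hML : M ≤ (sortedL n τ : Multiset ℕ) := by
    rw [sortedL, Multiset.sort_eq]
    refine Multiset.map_le_map (Finset.val_le_iff.mpr fun i hi => ?_)
    simp only [S, Finset.mem_filter, Finset.mem_univ, true_and] at hi ⊢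
    exact hi.trans_lt (ENat.natCast_lt_top _)
  have hMB : M.sum ≤ B := calc
    M.sum = ∑ i ∈ S, (τ i).toNat := Finset.sum_map_val _ _
    _ ≤ ∑ i ∈ S, t i :=
      Finset.sum_le_sum fun i hi => ENat.toNat_le_of_le_natCast (Finset.mem_filter.mp hi).2
    _ ≤ ∑ i, t i := Finset.sum_le_sum_of_subset S.subset_univ
    _ ≤ B := ht
  have hcard : Multiset.card M = S.card := Multiset.card_map _ _
  refine le_csSup ⟨(sortedL n τ).length, fun k hk => hk.1⟩ ⟨?_, ?_⟩
  · rw [← hcard, ← Multiset.coe_card]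
    exact Multiset.card_le_card hML
  · rw [← hcard]
    exact (Multiset.sum_take_card_le_of_le (Multiset.pairwise_sort _ _) hML).trans hMB
end

section
/- (Achievability/greedy direction of Theorem 1.) For any total budget B ∈ ℕ and any k ≤ L.length with (L.take k).sum ≤ B, there exists an allocation t : Fin n → ℕ with ∑ i, t i ≤ B that answers at least k questions correctly: card {i | τ i ≤ (t i : ℕ∞)} ≥ k. Such an allocation is obtained by assigning t i = (τ i).toNat to the k solvable questions with the smallest token complexities and t i = 0 to all other questions. -/
/-! The `k` smallest finite token complexities form a sub-multiset of `{(τ i).toNat | τ i < ⊤}`,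
hence are the complexities of some set `T` of `k` solvable questions; spending exactly `τ i`
tokens on each `i ∈ T` and nothing elsewhere costs their sum and answers all of `T`. -/

theorem Multiset.exists_le_map_eq_of_le_map_s7 {α β : Type*} {f : α → β} {s : Multiset α}
    {m : Multiset β} (h : m ≤ s.map f) : ∃ u ≤ s, u.map f = m := by
  induction s using Quotient.inductionOn with | h l => ?_
  induction m using Quotient.inductionOn with | h l₁ => ?_
  obtain ⟨l₂, hperm, hsub⟩ := (Multiset.coe_le.mp h : List.Subperm l₁ (l.map f))
  obtain ⟨l', hl', rfl⟩ := List.sublist_map_iff.mp hsub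
  exact ⟨l', Multiset.coe_le.mpr hl'.subperm, Multiset.coe_eq_coe.mpr hperm⟩

theorem Finset.exists_subset_map_val_eq_of_le_map {α β : Type*} {f : α → β} {s : Finset α}
    {m : Multiset β} (h : m ≤ s.val.map f) : ∃ t ⊆ s, t.val.map f = m := by
  obtain ⟨u, hu, rfl⟩ := Multiset.exists_le_map_eq_of_le_map_s7 h
  exact ⟨⟨u, Multiset.nodup_of_le hu s.nodup⟩, fun _ hx => Multiset.mem_of_le hu hx, rfl⟩

theorem coe_sortedL (n : ℕ) (τ : Fin n → ℕ∞) :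
    (sortedL n τ : Multiset ℕ) =
      (Finset.univ.filter (fun i => τ i < ⊤)).val.map (fun i => (τ i).toNat) :=
  Multiset.sort_eq _ _

theorem exists_finset_card_eq_sum_toNat_eq_sum_take {n : ℕ} {τ : Fin n → ℕ∞} {k : ℕ}
    (hk : k ≤ (sortedL n τ).length) :
    ∃ T : Finset (Fin n), (∀ i ∈ T, τ i < ⊤) ∧ T.card = k ∧
      ∑ i ∈ T, (τ i).toNat = ((sortedL n τ).take k).sum := by
  have hle : (((sortedL n τ).take k : List ℕ) : Multiset ℕ) ≤
      (Finset.univ.filter (fun i => τ i < ⊤)).val.map (fun i => (τ i).toNat) :=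
    coe_sortedL n τ ▸ Multiset.coe_le.mpr ((sortedL n τ).take_sublist k).subperm
  obtain ⟨T, hTS, hT⟩ := Finset.exists_subset_map_val_eq_of_le_map hle
  refine ⟨T, fun i hi => (Finset.mem_filter.mp (hTS hi)).2, ?_, ?_⟩
  · simpa [hk] using congrArg Multiset.card hT
  · simpa using congrArg Multiset.sum hT

section Allocation

variable {ι : Type*} [Fintype ι] [DecidableEq ι] (τ : ι → ℕ∞) (T : Finset ι)

def allocationOn (i : ι) : ℕ := if i ∈ T then (τ i).toNat else 0

theorem sum_allocationOn : ∑ i, allocationOn τ T i = ∑ i ∈ T, (τ i).toNat := by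
  simp [allocationOn, Finset.sum_ite_mem]

theorem subset_filter_le_allocationOn {τ : ι → ℕ∞} {T : Finset ι} (hT : ∀ i ∈ T, τ i < ⊤) :
    T ⊆ Finset.univ.filter (fun i => τ i ≤ (allocationOn τ T i : ℕ∞)) := fun i hi => by
  simp [allocationOn, hi, ENat.natCast_toNat (hT i hi).ne]

end Allocation

/-- Achievability/greedy direction of Theorem 1: if the sum of the `k` smallest
finite token complexities is at most `B`, there is an allocation within budget
`B` answering at least `k` questions correctly. -/
theorem greedy_achievable (n : ℕ) (τ : Fin n → ℕ∞) (B k : ℕ)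
    (hk : k ≤ (sortedL n τ).length) (hsum : ((sortedL n τ).take k).sum ≤ B) :
    ∃ t : Fin n → ℕ, (∑ i, t i) ≤ B ∧
      k ≤ (Finset.univ.filter (fun i => τ i ≤ (t i : ℕ∞))).card := by
  obtain ⟨T, hT_solvable, hT_card, hT_sum⟩ := exists_finset_card_eq_sum_toNat_eq_sum_take hk
  refine ⟨allocationOn τ T, ?_, ?_⟩
  · rw [sum_allocationOn, hT_sum]
    exact hsum
  · rw [← hT_card]
    exact Finset.card_le_card (subset_filter_le_allocationOn hT_solvable)
end
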